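/- arXiv:1409.3071 — 3 statements merged into one kernel-verified Lean document; each statement's English description precedes it below -/
import Mathlib

section
/- Let q ≥ 1 and let a_1,…,a_q, b_1,…,b_q be positive reals satisfying both e_i(b) ≥ e_i(a) for all i and the monotonicity chain e_q(b)/e_q(a) ≥ ⋯ ≥ e_1(b)/e_1(a) ≥ 1. Then for all x ≥ 0, the refined two-sided bound holds: 1 + (f_1²/f_2)(e^{(f_2/f_1)x} − 1) ≤ qFq(a;b;x) ≤ 1 − f_2 + (f_1 − f_2)x + f_2 e^x, where f_n = ∏_{i=1}^q (a_i)_n/(b_i)_n. -/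
open Finset Real MeasureTheory

noncomputable def rise (a : ℝ) (n : ℕ) : ℝ := ∏ k ∈ Finset.range n, (a + k)

noncomputable def esym {q : ℕ} (k : ℕ) (a : Fin q → ℝ) : ℝ :=
  ∑ s ∈ Finset.powersetCard k (Finset.univ : Finset (Fin q)), ∏ i ∈ s, a i

/-!
Write `f (n + 1) = f n * r n` with `r t = ∏ᵢ (aᵢ + t) / ∏ᵢ (bᵢ + t)`, and expand
`∏ᵢ (vᵢ + t) = ∑ₖ eₖ(v) t^(q-k)`. Then `eₖ(a) ≤ eₖ(b)` gives `r ≤ 1` on `t ≥ 0`, so `f` decreases,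
and bounding `f n` by `f 2` for `n ≥ 2` in the series gives the upper bound.

The ratio chain says that `eₗ(a) eₖ(b) ≤ eₖ(a) eₗ(b)` for `k ≤ l`, while for `0 ≤ s ≤ t` the
powers satisfy `s^(q-k) t^(q-l) ≤ t^(q-k) s^(q-l)`. Symmetrising the double sum over `(k, l)` and
`(l, k)` turns `∏(aᵢ+t) ∏(bᵢ+s) - ∏(aᵢ+s) ∏(bᵢ+t)` into a sum of products of two factors of the
same sign, so `r` is increasing. Hence `f (n + 1) ≥ f 1 r(1)ⁿ` with `r 1 = f 2 / f 1`, and comparing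
termwise with the exponential series of `f 2 / f 1 * x` gives the lower bound.
-/

theorem sum_mul_sum_le_sum_mul_sum_of_cross_le {ι : Type*} [LinearOrder ι] (s : Finset ι)
    {A B X Y : ι → ℝ}
    (hAB : ∀ k ∈ s, ∀ l ∈ s, k ≤ l → A l * B k ≤ A k * B l)
    (hXY : ∀ k ∈ s, ∀ l ∈ s, k ≤ l → Y k * X l ≤ X k * Y l) :
    (∑ k ∈ s, A k * Y k) * ∑ k ∈ s, B k * X k ≤ (∑ k ∈ s, A k * X k) * ∑ k ∈ s, B k * Y k := by
  have hterm : ∀ k ∈ s, ∀ l ∈ s, 0 ≤ (A k * B l - A l * B k) * (X k * Y l - Y k * X l) := by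
    intro k hk l hl
    rcases le_total k l with h | h
    · exact mul_nonneg (sub_nonneg.2 (hAB k hk l hl h)) (sub_nonneg.2 (hXY k hk l hl h))
    · exact mul_nonneg_of_nonpos_of_nonpos (by linarith [hAB l hl k hk h])
        (by linarith [hXY l hl k hk h])
  have hsymm : ∑ k ∈ s, ∑ l ∈ s, (A k * B l - A l * B k) * (X k * Y l - Y k * X l)
      = 2 * ((∑ k ∈ s, A k * X k) * ∑ k ∈ s, B k * Y k
        - (∑ k ∈ s, A k * Y k) * ∑ k ∈ s, B k * X k) := by
    set D : ι → ι → ℝ := fun k l => A k * X k * (B l * Y l) - A k * Y k * (B l * X l)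
    calc _ = ∑ k ∈ s, ∑ l ∈ s, (D k l + D l k) := by
          refine sum_congr rfl fun k _ => sum_congr rfl fun l _ => ?_
          simp only [D]; ring
      _ = 2 * ∑ k ∈ s, ∑ l ∈ s, D k l := by
          simp only [sum_add_distrib]
          rw [sum_comm (f := fun k l => D l k)]
          ring
      _ = _ := by simp only [D, sum_sub_distrib, sum_mul_sum]
  linarith [sum_nonneg fun k hk => sum_nonneg fun l hl => hterm k hk l hl]

theorem prod_add_const_eq_sum_esym {q : ℕ} (v : Fin q → ℝ) (c : ℝ) :
    ∏ i, (v i + c) = ∑ k ∈ range (q + 1), esym k v * c ^ (q - k) := by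
  rw [prod_add, sum_powerset, card_univ, Fintype.card_fin]
  refine sum_congr rfl fun k _ => ?_
  rw [esym, sum_mul]
  refine sum_congr rfl fun s hs => ?_
  rw [mem_powersetCard] at hs
  rw [prod_const, card_sdiff_of_subset hs.1, card_univ, Fintype.card_fin, hs.2]

theorem esym_pos {q : ℕ} {v : Fin q → ℝ} (hv : ∀ i, 0 < v i) {k : ℕ} (hk : k ≤ q) :
    0 < esym k v :=
  sum_pos (fun s _ => prod_pos fun i _ => hv i) (powersetCard_nonempty.2 (by simpa using hk))

section Expansion

variable {q : ℕ} {a b : Fin q → ℝ}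

theorem prod_add_le_prod_add (he : ∀ i : ℕ, 1 ≤ i → i ≤ q → esym i a ≤ esym i b)
    {c : ℝ} (hc : 0 ≤ c) : ∏ i, (a i + c) ≤ ∏ i, (b i + c) := by
  simp only [prod_add_const_eq_sum_esym]
  refine sum_le_sum fun k hk => ?_
  rcases k.eq_zero_or_pos with rfl | hk0
  · simp [esym]
  · exact mul_le_mul_of_nonneg_right (he k hk0 (Nat.lt_succ_iff.mp (mem_range.mp hk)))
      (pow_nonneg hc _)

theorem esym_mul_esym_le_of_div_monotone (ha : ∀ i, 0 < a i)
    (hchain : ∀ i : ℕ, i < q → esym i b / esym i a ≤ esym (i + 1) b / esym (i + 1) a)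
    {k l : ℕ} (hkl : k ≤ l) (hl : l ≤ q) : esym l a * esym k b ≤ esym k a * esym l b := by
  have hratio : esym k b / esym k a ≤ esym l b / esym l a := by
    induction l, hkl using Nat.le_induction with
    | base => rfl
    | succ m _ ih => exact (ih (by omega)).trans (hchain m (by omega))
  rw [div_le_div_iff₀ (esym_pos ha (hkl.trans hl)) (esym_pos ha hl)] at hratio
  linarith

theorem prod_add_mul_prod_add_le (ha : ∀ i, 0 < a i)
    (hchain : ∀ i : ℕ, i < q → esym i b / esym i a ≤ esym (i + 1) b / esym (i + 1) a)
    {s t : ℝ} (hs : 0 ≤ s) (hst : s ≤ t) :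
    (∏ i, (a i + s)) * ∏ i, (b i + t) ≤ (∏ i, (a i + t)) * ∏ i, (b i + s) := by
  simp only [prod_add_const_eq_sum_esym]
  apply sum_mul_sum_le_sum_mul_sum_of_cross_le
  · intro k _ l hl hkl
    exact esym_mul_esym_le_of_div_monotone ha hchain hkl (Nat.lt_succ_iff.mp (mem_range.mp hl))
  · intro k _ l hl hkl
    have hexp : q - k = q - l + (l - k) := by rw [mem_range] at hl; omega
    calc s ^ (q - k) * t ^ (q - l) = (s ^ (q - l) * t ^ (q - l)) * s ^ (l - k) := by
          rw [hexp, pow_add]; ring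
      _ ≤ (s ^ (q - l) * t ^ (q - l)) * t ^ (l - k) :=
          mul_le_mul_of_nonneg_left (pow_le_pow_left₀ hs hst _)
            (mul_nonneg (pow_nonneg hs _) (pow_nonneg (hs.trans hst) _))
      _ = t ^ (q - k) * s ^ (q - l) := by rw [hexp, pow_add]; ring

theorem prod_add_pos {v : Fin q → ℝ} (hv : ∀ i, 0 < v i) {t : ℝ} (ht : 0 ≤ t) :
    0 < ∏ i, (v i + t) :=
  prod_pos fun i _ => by have := hv i; positivity

noncomputable def termRatio (a b : Fin q → ℝ) (t : ℝ) : ℝ := (∏ i, (a i + t)) / ∏ i, (b i + t)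

theorem termRatio_le_one (hb : ∀ i, 0 < b i)
    (he : ∀ i : ℕ, 1 ≤ i → i ≤ q → esym i a ≤ esym i b) {t : ℝ} (ht : 0 ≤ t) :
    termRatio a b t ≤ 1 :=
  div_le_one_of_le₀ (prod_add_le_prod_add he ht) (prod_add_pos hb ht).le

theorem termRatio_le_termRatio (ha : ∀ i, 0 < a i) (hb : ∀ i, 0 < b i)
    (hchain : ∀ i : ℕ, i < q → esym i b / esym i a ≤ esym (i + 1) b / esym (i + 1) a)
    {s t : ℝ} (hs : 0 ≤ s) (hst : s ≤ t) : termRatio a b s ≤ termRatio a b t := by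
  rw [termRatio, termRatio, div_le_div_iff₀ (prod_add_pos hb hs) (prod_add_pos hb (hs.trans hst))]
  exact prod_add_mul_prod_add_le ha hchain hs hst

end Expansion

theorem prod_rise_succ {q : ℕ} (v : Fin q → ℝ) (n : ℕ) :
    ∏ i, rise (v i) (n + 1) = (∏ i, rise (v i) n) * ∏ i, (v i + n) := by
  simp only [rise, prod_range_succ, prod_mul_distrib]

theorem prod_rise_pos {q : ℕ} {v : Fin q → ℝ} (hv : ∀ i, 0 < v i) (n : ℕ) :
    0 < ∏ i, rise (v i) n :=
  prod_pos fun i _ => prod_pos fun k _ => by have := hv i; positivity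

section Recurrence

variable {u r : ℕ → ℝ} (hu : ∀ n, u (n + 1) = u n * r n) (hu0 : ∀ n, 0 ≤ u n)
include hu hu0

theorem antitone_of_succ_eq_mul (hr : ∀ n, r n ≤ 1) : Antitone u :=
  antitone_nat_of_succ_le fun n => by rw [hu]; exact mul_le_of_le_one_right (hu0 n) (hr n)

theorem mul_pow_le_of_succ_eq_mul (hr0 : 0 ≤ r 1) (hr : ∀ n, r 1 ≤ r (n + 1)) (n : ℕ) :
    u 1 * r 1 ^ n ≤ u (n + 1) := by
  induction n with
  | zero => simp
  | succ n ih =>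
    calc u 1 * r 1 ^ (n + 1) = u 1 * r 1 ^ n * r 1 := by ring
      _ ≤ u (n + 1) * r (n + 1) := by gcongr; exacts [hu0 _, hr n]
      _ = u (n + 2) := (hu (n + 1)).symm

end Recurrence

theorem summable_mul_pow_div_factorial {f : ℕ → ℝ} {C : ℝ} (hf : ∀ n, |f n| ≤ C) (x : ℝ) :
    Summable fun n => f n * x ^ n / n.factorial := by
  refine Summable.of_norm_bounded ((Real.summable_pow_div_factorial |x|).mul_left C) fun n => ?_
  rw [Real.norm_eq_abs, abs_div, abs_mul, abs_pow, Nat.abs_cast, mul_div_assoc]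
  gcongr
  exact hf n

theorem tsum_pow_div_factorial (y : ℝ) : ∑' n : ℕ, y ^ n / n.factorial = exp y := by
  rw [exp_eq_exp_ℝ, NormedSpace.exp_eq_tsum_div]

theorem tsum_pow_succ_div_factorial (y : ℝ) :
    ∑' n : ℕ, y ^ (n + 1) / (n + 1).factorial = exp y - 1 := by
  rw [← tsum_pow_div_factorial, (Real.summable_pow_div_factorial y).tsum_eq_zero_add]
  simp

theorem tsum_pow_add_two_div_factorial (y : ℝ) :
    ∑' n : ℕ, y ^ (n + 2) / (n + 2).factorial = exp y - 1 - y := by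
  rw [← tsum_pow_div_factorial, ← (Real.summable_pow_div_factorial y).sum_add_tsum_nat_add 2]
  simp only [sum_range_succ, sum_range_zero, pow_zero, pow_one, Nat.factorial_zero,
    Nat.factorial_one, Nat.cast_one, div_one, zero_add]
  ring

section ExpSeries

variable {f : ℕ → ℝ} {x : ℝ} (hs : Summable fun n => f n * x ^ n / n.factorial) (hx : 0 ≤ x)
include hs hx

theorem add_mul_exp_sub_one_le_tsum {K c : ℝ} (hK : ∀ n, K * c ^ (n + 1) ≤ f (n + 1)) :
    f 0 + K * (exp (c * x) - 1) ≤ ∑' n, f n * x ^ n / n.factorial := by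
  have hK' : Summable fun n : ℕ => K * ((c * x) ^ (n + 1) / (n + 1).factorial) :=
    ((summable_nat_add_iff 1).2 (Real.summable_pow_div_factorial (c * x))).mul_left K
  rw [hs.tsum_eq_zero_add, ← tsum_pow_succ_div_factorial, ← tsum_mul_left]
  simp only [pow_zero, mul_one, Nat.factorial_zero, Nat.cast_one, div_one]
  refine add_le_add_right (hK'.tsum_le_tsum (fun n => ?_) ((summable_nat_add_iff 1).2 hs)) _
  rw [mul_pow, ← mul_div_assoc, ← mul_assoc]
  gcongr
  exact hK n

theorem tsum_le_sub_add_mul_add_mul_exp (hf : ∀ n, f (n + 2) ≤ f 2) :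
    ∑' n, f n * x ^ n / n.factorial ≤ f 0 - f 2 + (f 1 - f 2) * x + f 2 * exp x := by
  have h2 : Summable fun n : ℕ => f 2 * (x ^ (n + 2) / (n + 2).factorial) :=
    ((summable_nat_add_iff 2).2 (Real.summable_pow_div_factorial x)).mul_left (f 2)
  have htail : ∑' n, f (n + 2) * x ^ (n + 2) / (n + 2).factorial ≤ f 2 * (exp x - 1 - x) := by
    rw [← tsum_pow_add_two_div_factorial, ← tsum_mul_left]
    refine ((summable_nat_add_iff 2).2 hs).tsum_le_tsum (fun n => ?_) h2
    rw [← mul_div_assoc]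
    gcongr
    exact hf n
  rw [← hs.sum_add_tsum_nat_add 2]
  simp only [sum_range_succ, sum_range_zero, pow_zero, pow_one, Nat.factorial_zero,
    Nat.factorial_one, Nat.cast_one, div_one, mul_one, zero_add]
  linarith

end ExpSeries

theorem stmt4_general (q : ℕ) (a b : Fin q → ℝ)
    (ha : ∀ i, 0 < a i) (hb : ∀ i, 0 < b i)
    (he : ∀ i : ℕ, 1 ≤ i → i ≤ q → esym i a ≤ esym i b)
    (hchain : ∀ i : ℕ, i < q → esym i b / esym i a ≤ esym (i + 1) b / esym (i + 1) a)
    (f : ℕ → ℝ)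
    (hf : ∀ n, f n = (∏ i, rise (a i) n) / (∏ i, rise (b i) n))
    (x : ℝ) (hx : 0 ≤ x) :
    1 + f 1 ^ 2 / f 2 * (Real.exp ((f 2 / f 1) * x) - 1)
      ≤ (∑' n : ℕ, f n * x ^ n / (Nat.factorial n)) ∧
    (∑' n : ℕ, f n * x ^ n / (Nat.factorial n))
      ≤ 1 - f 2 + (f 1 - f 2) * x + f 2 * Real.exp x := by
  have hf_pos : ∀ n, 0 < f n := fun n => by
    rw [hf]; exact div_pos (prod_rise_pos ha n) (prod_rise_pos hb n)
  have hf0 : f 0 = 1 := by simp [hf, rise]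
  have hf_succ : ∀ n, f (n + 1) = f n * termRatio a b n := fun n => by
    rw [hf, hf, prod_rise_succ, prod_rise_succ, mul_div_mul_comm, termRatio]
  have hanti : Antitone f := antitone_of_succ_eq_mul hf_succ (fun n => (hf_pos n).le)
    fun n => termRatio_le_one hb he n.cast_nonneg
  have hc : f 2 / f 1 = termRatio a b (1 : ℕ) := by
    rw [hf_succ 1, mul_div_cancel_left₀ _ (hf_pos 1).ne']
  have hs : Summable fun n => f n * x ^ n / n.factorial :=
    summable_mul_pow_div_factorial (C := 1)
      (fun n => by rw [abs_of_pos (hf_pos n), ← hf0]; exact hanti n.zero_le) x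
  have hK : ∀ n, f 1 ^ 2 / f 2 * (f 2 / f 1) ^ (n + 1) ≤ f (n + 1) := fun n =>
    calc f 1 ^ 2 / f 2 * (f 2 / f 1) ^ (n + 1) = f 1 * (f 2 / f 1) ^ n := by
          have := hf_pos 1; have := hf_pos 2
          rw [pow_succ' _ n, ← mul_assoc]; congr 1; field_simp
      _ ≤ f (n + 1) := hc ▸ mul_pow_le_of_succ_eq_mul hf_succ (fun n => (hf_pos n).le)
          (hc ▸ (div_pos (hf_pos 2) (hf_pos 1)).le)
          (fun n => termRatio_le_termRatio ha hb hchain (Nat.cast_nonneg 1) (by simp)) n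
  constructor
  · simpa only [hf0] using add_mul_exp_sub_one_le_tsum hs hx hK
  · simpa only [hf0] using tsum_le_sub_add_mul_add_mul_exp hs hx fun n => hanti (by omega)

theorem stmt4 (q : ℕ) (hq : 1 ≤ q) (a b : Fin q → ℝ)
    (ha : ∀ i, 0 < a i) (hb : ∀ i, 0 < b i)
    (he : ∀ i : ℕ, 1 ≤ i → i ≤ q → esym i a ≤ esym i b)
    (hchain : ∀ i : ℕ, i < q → esym i b / esym i a ≤ esym (i + 1) b / esym (i + 1) a)
    (f : ℕ → ℝ)
    (hf : ∀ n, f n = (∏ i, rise (a i) n) / (∏ i, rise (b i) n))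
    (x : ℝ) (hx : 0 ≤ x) :
    1 + f 1 ^ 2 / f 2 * (Real.exp ((f 2 / f 1) * x) - 1)
      ≤ (∑' n : ℕ, f n * x ^ n / (Nat.factorial n)) ∧
    (∑' n : ℕ, f n * x ^ n / (Nat.factorial n))
      ≤ 1 - f 2 + (f 1 - f 2) * x + f 2 * Real.exp x :=
  stmt4_general q a b ha hb he hchain f hf x hx
end

section
/- Let q ≥ 2, p = q − 1, and let a_1,…,a_p, b_1,…,b_q be positive reals. Suppose d = min_{1≤i≤q} [e_i(b_1,…,b_q) − e_i(a_1,…,a_p)] / e_{i-1}(a_1,…,a_p) is positive (conventions e_0 = 1, e_q(a) = 0). Then for every n ≥ 1, f_n (d)_n ≤ 1 where f_n = ∏_{i=1}^p (a_i)_n / ∏_{i=1}^q (b_i)_n, and consequently for all x ≥ 0, {q-1}F{q}(a;b;x) ≤ 0F1(-;d;x). -/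
open Finset Real MeasureTheory

/-!
Since `e_i(a, d) = e_i(a) + d e_{i-1}(a)`, the hypothesis on `d` says exactly that
`e_i(a_1, …, a_p, d) ≤ e_i(b)` for every `i`. Expanding both products in elementary symmetric
polynomials then gives `(d + n) ∏ (a_j + n) ≤ ∏ (b_j + n)` for all `n ≥ 0`, and multiplying these
over `n < N` gives `(d)_N ∏ (a_j)_N ≤ ∏ (b_j)_N`, i.e. `f_N (d)_N ≤ 1`. The series inequality
follows termwise; the `₀F₁` series converges because `(d)_n ≥ min(d, 1)^n`.
-/

lemma rise_pos {a : ℝ} (ha : 0 < a) (n : ℕ) : 0 < rise a n :=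
  prod_pos fun k _ => by positivity

lemma pow_le_rise {a r : ℝ} (hr : 0 ≤ r) (hra : r ≤ a) (n : ℕ) : r ^ n ≤ rise a n := by
  calc r ^ n = ∏ _k ∈ range n, r := by rw [prod_const, card_range]
    _ ≤ rise a n := prod_le_prod (fun _ _ => hr) fun k _ => by
      have : (0 : ℝ) ≤ k := k.cast_nonneg; linarith

lemma esym_eq_esymm {m : ℕ} (k : ℕ) (c : Fin m → ℝ) :
    esym k c = (univ.val.map c).esymm k :=
  (Finset.esymm_map_val c univ k).symm

@[simp] lemma esym_zero {m : ℕ} (c : Fin m → ℝ) : esym 0 c = 1 := by simp [esym]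

lemma esym_eq_zero_of_lt {m k : ℕ} (c : Fin m → ℝ) (h : m < k) : esym k c = 0 := by
  rw [esym, powersetCard_eq_empty.mpr (by simpa using h), sum_empty]

lemma esym_pos_s8 {m k : ℕ} {c : Fin m → ℝ} (hc : ∀ i, 0 < c i) (h : k ≤ m) : 0 < esym k c :=
  sum_pos (fun s _ => prod_pos fun i _ => hc i) (powersetCard_nonempty.mpr (by simpa using h))

lemma esym_cons_succ {m : ℕ} (k : ℕ) (x : ℝ) (c : Fin m → ℝ) :
    esym (k + 1) (Fin.cons x c : Fin (m + 1) → ℝ) = esym (k + 1) c + x * esym k c := by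
  simp only [esym_eq_esymm, Multiset.esymm, Fin.univ_val_map, List.ofFn_succ, Fin.cons_zero,
    Fin.cons_succ, ← Multiset.cons_coe, Multiset.powersetCard_cons, Multiset.map_add,
    Multiset.sum_add, Multiset.map_map, Function.comp_def, Multiset.prod_cons,
    Multiset.sum_map_mul_left]

lemma prod_add_eq_sum_esym {m : ℕ} (c : Fin m → ℝ) (x : ℝ) :
    ∏ i, (c i + x) = ∑ k ∈ range (m + 1), esym k c * x ^ (m - k) := by
  rw [prod_add, sum_powerset, card_univ, Fintype.card_fin]
  refine sum_congr rfl fun k _ => ?_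
  rw [esym, sum_mul]
  refine sum_congr rfl fun t ht => ?_
  rw [prod_const, card_sdiff_of_subset (subset_univ t), card_univ, Fintype.card_fin,
    (mem_powersetCard.mp ht).2]

lemma prod_add_le_prod_add_of_esym_le {m : ℕ} {c c' : Fin m → ℝ}
    (h : ∀ k, esym k c ≤ esym k c') {x : ℝ} (hx : 0 ≤ x) :
    ∏ i, (c i + x) ≤ ∏ i, (c' i + x) := by
  rw [prod_add_eq_sum_esym, prod_add_eq_sum_esym]
  gcongr with k
  exact h k

lemma prod_rise_le_prod_rise {ι : Type*} [Fintype ι] {c c' : ι → ℝ} (hc : ∀ i, 0 ≤ c i)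
    (h : ∀ n : ℕ, ∏ i, (c i + n) ≤ ∏ i, (c' i + n)) (n : ℕ) :
    ∏ i, rise (c i) n ≤ ∏ i, rise (c' i) n := by
  simp only [rise]
  rw [prod_comm, prod_comm (s := univ)]
  exact prod_le_prod (fun k _ => prod_nonneg fun i _ => by have := hc i; positivity)
    fun k _ => h k

lemma summable_pow_div_rise_mul_factorial {d : ℝ} (hd : 0 < d) (x : ℝ) :
    Summable fun n : ℕ => x ^ n / (rise d n * n.factorial) := by
  set r := min d 1
  have hr : 0 < r := lt_min hd one_pos
  refine .of_norm_bounded (Real.summable_pow_div_factorial (|x| / r)) fun n => ?_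
  have hrise := rise_pos hd n
  rw [Real.norm_eq_abs, abs_div, abs_pow, abs_of_pos (by positivity : 0 < rise d n * n.factorial),
    div_pow, div_div]
  gcongr
  exact pow_le_rise hr.le (min_le_left d 1) n

lemma tsum_mul_pow_div_factorial_le {c : ℕ → ℝ} {d : ℝ} (hd : 0 < d) (hc : ∀ n, 0 ≤ c n)
    (hcd : ∀ n, c n * rise d n ≤ 1) {x : ℝ} (hx : 0 ≤ x) :
    ∑' n : ℕ, c n * x ^ n / n.factorial ≤ ∑' n : ℕ, x ^ n / (rise d n * n.factorial) := by
  have hterm (n : ℕ) : c n * x ^ n / n.factorial ≤ x ^ n / (rise d n * n.factorial) := by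
    calc c n * x ^ n / n.factorial ≤ 1 / rise d n * x ^ n / n.factorial := by
          gcongr
          rw [le_div_iff₀ (rise_pos hd n)]
          exact hcd n
      _ = x ^ n / (rise d n * n.factorial) := by rw [one_div, inv_mul_eq_div, div_div]
  have hsum := summable_pow_div_rise_mul_factorial hd x
  exact (hsum.of_nonneg_of_le (fun n => by have := hc n; positivity) hterm).tsum_le_tsum
    hterm hsum

lemma esym_cons_le {m : ℕ} {a : Fin m → ℝ} (ha : ∀ i, 0 < a i) {b : Fin (m + 1) → ℝ} {d : ℝ}
    (hd : ∀ i, 1 ≤ i → i ≤ m + 1 → d ≤ (esym i b - esym i a) / esym (i - 1) a) (k : ℕ) :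
    esym k (Fin.cons d a : Fin (m + 1) → ℝ) ≤ esym k b := by
  rcases k with _ | k
  · simp
  rw [esym_cons_succ]
  rcases le_or_gt k m with hk | hk
  · have := hd (k + 1) (by omega) (by omega)
    rw [Nat.add_sub_cancel, le_div_iff₀ (esym_pos_s8 ha hk)] at this
    linarith
  · rw [esym_eq_zero_of_lt a (by omega), esym_eq_zero_of_lt a hk, esym_eq_zero_of_lt b (by omega),
      mul_zero, add_zero]

lemma rise_mul_prod_rise_le {m : ℕ} {a : Fin m → ℝ} (ha : ∀ i, 0 < a i) {b : Fin (m + 1) → ℝ}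
    {d : ℝ} (hd₀ : 0 ≤ d)
    (hd : ∀ i, 1 ≤ i → i ≤ m + 1 → d ≤ (esym i b - esym i a) / esym (i - 1) a) (n : ℕ) :
    rise d n * ∏ i, rise (a i) n ≤ ∏ i, rise (b i) n := by
  have hc : ∀ i, 0 ≤ (Fin.cons d a : Fin (m + 1) → ℝ) i :=
    Fin.cases hd₀ fun i => (ha i).le
  have := prod_rise_le_prod_rise hc
    (fun n => prod_add_le_prod_add_of_esym_le (esym_cons_le ha hd) n.cast_nonneg) n
  simpa only [Fin.prod_univ_succ, Fin.cons_zero, Fin.cons_succ] using this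

theorem stmt8_general (q : ℕ) (a : Fin (q - 1) → ℝ) (b : Fin q → ℝ)
    (ha : ∀ i, 0 < a i) (hb : ∀ i, 0 < b i) (d : ℝ)
    (hd : IsLeast {y : ℝ | ∃ i : ℕ, 1 ≤ i ∧ i ≤ q ∧
      y = (esym i b - esym i a) / esym (i - 1) a} d)
    (hdpos : 0 < d) :
    (∀ n : ℕ, 1 ≤ n →
      (∏ i, rise (a i) n) / (∏ i, rise (b i) n) * rise d n ≤ 1) ∧
    (∀ x : ℝ, 0 ≤ x →
      (∑' n : ℕ, (∏ i, rise (a i) n) / (∏ i, rise (b i) n) * x ^ n / (Nat.factorial n))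
        ≤ ∑' n : ℕ, x ^ n / (rise d n * (Nat.factorial n))) := by
  obtain ⟨Q, rfl⟩ : ∃ Q, q = Q + 1 := by
    obtain ⟨_, i, hi, hiq, -⟩ := hd.1
    exact ⟨q - 1, by omega⟩
  have hf (n : ℕ) : (∏ i, rise (a i) n) / (∏ i, rise (b i) n) * rise d n ≤ 1 := by
    rw [div_mul_eq_mul_div, div_le_one (prod_pos fun i _ => rise_pos (hb i) n), mul_comm]
    exact rise_mul_prod_rise_le ha hdpos.le (fun i hi hiq => hd.2 ⟨i, hi, hiq, rfl⟩) n
  have hf₀ (n : ℕ) : 0 ≤ (∏ i, rise (a i) n) / (∏ i, rise (b i) n) :=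
    div_nonneg (prod_nonneg fun i _ => (rise_pos (ha i) n).le)
      (prod_nonneg fun i _ => (rise_pos (hb i) n).le)
  exact ⟨fun n _ => hf n, fun x hx => tsum_mul_pow_div_factorial_le hdpos hf₀ hf hx⟩

theorem stmt8 (q : ℕ) (hq : 2 ≤ q) (a : Fin (q - 1) → ℝ) (b : Fin q → ℝ)
    (ha : ∀ i, 0 < a i) (hb : ∀ i, 0 < b i) (d : ℝ)
    (hd : IsLeast {y : ℝ | ∃ i : ℕ, 1 ≤ i ∧ i ≤ q ∧
      y = (esym i b - esym i a) / esym (i - 1) a} d)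
    (hdpos : 0 < d) :
    (∀ n : ℕ, 1 ≤ n →
      (∏ i, rise (a i) n) / (∏ i, rise (b i) n) * rise d n ≤ 1) ∧
    (∀ x : ℝ, 0 ≤ x →
      (∑' n : ℕ, (∏ i, rise (a i) n) / (∏ i, rise (b i) n) * x ^ n / (Nat.factorial n))
        ≤ ∑' n : ℕ, x ^ n / (rise d n * (Nat.factorial n))) :=
  stmt8_general q a b ha hb d hd hdpos
end

section
/- For c > 1 and x ≥ 0, 0F1(-;c;x) ≤ e^{√(4x+(c+1)²) − c − 1} · ((c−1)/(2c) + (1/(2c))√(4x+(c+1)²))^{1−c}. -/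
/-!
Write `F = ₀F₁(;c;·)` and `E = ₀F₁(;c+1;·)`, so that `F' = E / c`. Comparing coefficients of
Cauchy products shows `(x + c) E² + c (c - 1) F E ≤ c² F²` for `x ≥ 0`: after symmetrising in
`(i, j) ↔ (j, i)` twice the coefficient of `xⁿ` becomes `∑_{i+j=n} bᵢ bⱼ ((i + j) - (i - j)²)` with
`bᵢ` the coefficients of `E`, and summation by parts turns this into a sum of nonnegative
terms. Solving the quadratic gives `F' / F ≤ 2 / (√(4x + (c+1)²) + c - 1)`, and the right-hand
side of the theorem is `exp` of the integral of this bound from `0` to `x`, since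
`√(4x + (c+1)²) + (1 - c) log ((c - 1)/(2c) + √(4x + (c+1)²)/(2c))` is an antiderivative of it.
-/

open Finset Real MeasureTheory

open scoped Nat

theorem Finset.Nat.sum_antidiagonal_sub_succ {M : Type*} [AddCommGroup M] (H : ℕ → ℕ → M)
    (n : ℕ) :
    ∑ p ∈ antidiagonal n, (H p.1 (p.2 + 1) - H (p.1 + 1) p.2) = H 0 (n + 1) - H (n + 1) 0 := by
  have h := Nat.sum_antidiagonal_succ (n := n) (f := fun p => H p.1 p.2)
  rw [Nat.sum_antidiagonal_succ'] at h
  rw [sum_sub_distrib, sub_eq_sub_iff_add_eq_add, add_comm]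
  simpa only using h

theorem hasSum_antidiagonal_mul_pow {u v : ℕ → ℝ} (hu0 : ∀ n, 0 ≤ u n) (hv0 : ∀ n, 0 ≤ v n)
    (hu : ∀ r, Summable fun n => u n * r ^ n) (hv : ∀ r, Summable fun n => v n * r ^ n)
    (y : ℝ) :
    HasSum (fun n => (∑ p ∈ antidiagonal n, u p.1 * v p.2) * y ^ n)
      ((∑' n, u n * y ^ n) * ∑' n, v n * y ^ n) := by
  have norm_summable : ∀ w : ℕ → ℝ, (∀ n, 0 ≤ w n) → (∀ r, Summable fun n => w n * r ^ n) →
      Summable fun n => ‖w n * y ^ n‖ := fun w hw0 hw => (hw |y|).congr fun n => by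
    rw [norm_mul, norm_pow, Real.norm_eq_abs, Real.norm_eq_abs, abs_of_nonneg (hw0 n)]
  have hu' := norm_summable u hu0 hu
  have hv' := norm_summable v hv0 hv
  have hterm : ∀ n, ∑ p ∈ antidiagonal n, u p.1 * y ^ p.1 * (v p.2 * y ^ p.2)
      = (∑ p ∈ antidiagonal n, u p.1 * v p.2) * y ^ n := fun n => by
    rw [sum_mul]
    refine sum_congr rfl fun p hp => ?_
    rw [← mem_antidiagonal.1 hp, pow_add]
    ring
  rw [tsum_mul_tsum_eq_tsum_sum_antidiagonal_of_summable_norm hu' hv']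
  simpa only [hterm] using
    (summable_norm_sum_mul_antidiagonal_of_summable_norm hu' hv').of_norm.hasSum

theorem hasDerivAt_tsum_mul_pow {u : ℕ → ℝ}
    (hu : ∀ r, Summable fun n => (n + 1) * |u (n + 1)| * r ^ n) (x : ℝ) :
    HasDerivAt (fun y => ∑' n, u n * y ^ n) (∑' n, (n + 1) * u (n + 1) * x ^ n) x := by
  set R := |x| + 1 with hR
  have hx : x ∈ Set.Ioo (-R) R := ⟨by linarith [neg_abs_le x], by linarith [le_abs_self x]⟩
  have hR0 : 0 ∈ Set.Ioo (-R) R := ⟨by linarith [abs_nonneg x], by linarith [abs_nonneg x]⟩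
  have hbound : Summable fun n => n * |u n| * R ^ (n - 1) := by
    rw [← summable_nat_add_iff 1]
    simpa using hu R
  have hle : ∀ n, ∀ y ∈ Set.Ioo (-R) R, ‖u n * (n * y ^ (n - 1))‖ ≤ n * |u n| * R ^ (n - 1) := by
    intro n y hy
    have : |y| ^ (n - 1) ≤ R ^ (n - 1) :=
      pow_le_pow_left₀ (abs_nonneg y) (abs_le.2 ⟨hy.1.le, hy.2.le⟩) _
    rw [norm_mul, norm_mul, norm_pow, Real.norm_eq_abs, Real.norm_eq_abs, Real.norm_eq_abs,
      Nat.abs_cast, mul_left_comm, ← mul_assoc]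
    gcongr
  have hderiv := hasDerivAt_tsum_of_isPreconnected hbound isOpen_Ioo isPreconnected_Ioo
    (g := fun n y => u n * y ^ n) (fun n y _ => (hasDerivAt_pow n y).const_mul (u n)) hle
    hR0 (hasSum_single 0 fun n hn => by simp [hn]).summable hx
  have hshift : ∑' n, u n * (n * x ^ (n - 1)) = ∑' n, (n + 1) * u (n + 1) * x ^ n := by
    rw [(hbound.of_norm_bounded fun n => hle n x hx).tsum_eq_zero_add]
    simp only [Nat.cast_zero, zero_mul, mul_zero, zero_add, Nat.cast_add, Nat.cast_one,
      Nat.add_sub_cancel]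
    exact tsum_congr fun n => by ring
  exact hshift ▸ hderiv

theorem le_mul_exp_sub_of_hasDerivAt {f f' g g' : ℝ → ℝ} {a b : ℝ} (hab : a ≤ b)
    (hf : ∀ y ∈ Set.Icc a b, HasDerivAt f (f' y) y)
    (hg : ∀ y ∈ Set.Icc a b, HasDerivAt g (g' y) y)
    (hle : ∀ y ∈ Set.Icc a b, f' y ≤ g' y * f y) :
    f b ≤ f a * exp (g b - g a) := by
  have hderiv : ∀ y ∈ Set.Icc a b, HasDerivAt (fun y => f y * exp (-g y))
      ((f' y - g' y * f y) * exp (-g y)) y := fun y hy =>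
    ((hf y hy).mul (hg y hy).neg.exp).congr_deriv (by simp only [Pi.neg_apply]; ring)
  have hanti : AntitoneOn (fun y => f y * exp (-g y)) (Set.Icc a b) :=
    antitoneOn_of_hasDerivWithinAt_nonpos (convex_Icc a b)
      (fun y hy => (hderiv y hy).continuousAt.continuousWithinAt)
      (fun y hy => (hderiv y (interior_subset hy)).hasDerivWithinAt) fun y hy =>
        mul_nonpos_of_nonpos_of_nonneg (sub_nonpos.2 (hle y (interior_subset hy))) (exp_pos _).le
  calc f b = f b * exp (-g b) * exp (g b) := by
        rw [mul_assoc, ← exp_add, neg_add_cancel, exp_zero, mul_one]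
    _ ≤ f a * exp (-g a) * exp (g b) :=
        mul_le_mul_of_nonneg_right (hanti (Set.left_mem_Icc.2 hab) (Set.right_mem_Icc.2 hab) hab)
          (exp_pos _).le
    _ = f a * exp (g b - g a) := by rw [mul_assoc, ← exp_add, neg_add_eq_sub]

lemma rise_succ (c : ℝ) (n : ℕ) : rise c (n + 1) = rise c n * (c + n) :=
  prod_range_succ _ _

lemma rise_succ' (c : ℝ) (n : ℕ) : rise c (n + 1) = c * rise (c + 1) n := by
  simp only [rise, prod_range_succ', Nat.cast_add, Nat.cast_one, Nat.cast_zero, add_zero]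
  rw [mul_comm]
  congr 1
  exact prod_congr rfl fun k _ => by ring

lemma rise_pos_s10 {c : ℝ} (hc : 0 < c) (n : ℕ) : 0 < rise c n :=
  prod_pos fun k _ => by positivity

lemma min_one_pow_le_rise {c : ℝ} (hc : 0 < c) (n : ℕ) : min c 1 ^ n ≤ rise c n := by
  calc min c 1 ^ n = ∏ _k ∈ range n, min c 1 := by simp
    _ ≤ rise c n := prod_le_prod (fun _ _ => (lt_min hc one_pos).le) fun k _ => by
      linarith [min_le_left c 1, k.cast_nonneg (α := ℝ)]

noncomputable def hyp0F1 (c x : ℝ) : ℝ := ∑' n : ℕ, x ^ n / (rise c n * n !)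

noncomputable def hyp0F1Coeff (c : ℝ) (n : ℕ) : ℝ := (rise c n * n !)⁻¹

lemma hyp0F1Coeff_pos {c : ℝ} (hc : 0 < c) (n : ℕ) : 0 < hyp0F1Coeff c n := by
  have := rise_pos_s10 hc n
  unfold hyp0F1Coeff
  positivity

lemma hyp0F1Coeff_succ (c : ℝ) (n : ℕ) :
    hyp0F1Coeff c (n + 1) = hyp0F1Coeff c n / ((c + n) * (n + 1)) := by
  simp only [hyp0F1Coeff, rise_succ, Nat.factorial_succ, Nat.cast_mul, Nat.cast_succ]
  rw [div_eq_mul_inv, ← mul_inv]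
  ring_nf

lemma hyp0F1Coeff_add_one {c : ℝ} (hc : c ≠ 0) (n : ℕ) :
    hyp0F1Coeff (c + 1) n = c * ((n + 1) * hyp0F1Coeff c (n + 1)) := by
  have : ((n : ℝ) + 1) ≠ 0 := by positivity
  simp only [hyp0F1Coeff, rise_succ', Nat.factorial_succ, Nat.cast_mul, Nat.cast_succ]
  field_simp

lemma mul_hyp0F1Coeff {c : ℝ} (hc : 0 < c) (n : ℕ) :
    c * hyp0F1Coeff c n = (c + n) * hyp0F1Coeff (c + 1) n := by
  have := rise_pos_s10 hc n
  have : c + n ≠ 0 := by positivity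
  have h : rise (c + 1) n = rise c n * (c + n) / c := by
    rw [← rise_succ, rise_succ']
    field_simp
  simp only [hyp0F1Coeff, h]
  field_simp

lemma summable_hyp0F1Coeff_mul_pow {c : ℝ} (hc : 0 < c) (x : ℝ) :
    Summable fun n => hyp0F1Coeff c n * x ^ n := by
  have hm : 0 < min c 1 := lt_min hc one_pos
  refine .of_norm_bounded (Real.summable_pow_div_factorial (|x| / min c 1)) fun n => ?_
  have := min_one_pow_le_rise hc n
  rw [norm_mul, norm_pow, Real.norm_eq_abs, Real.norm_eq_abs, abs_of_pos (hyp0F1Coeff_pos hc n),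
    hyp0F1Coeff, inv_mul_eq_div, div_pow, div_div]
  gcongr

lemma hasSum_hyp0F1 {c : ℝ} (hc : 0 < c) (x : ℝ) :
    HasSum (fun n => hyp0F1Coeff c n * x ^ n) (hyp0F1 c x) := by
  have : hyp0F1 c x = ∑' n, hyp0F1Coeff c n * x ^ n := tsum_congr fun n => div_eq_inv_mul _ _
  exact this ▸ (summable_hyp0F1Coeff_mul_pow hc x).hasSum

lemma hyp0F1_zero (c : ℝ) : hyp0F1 c 0 = 1 := by
  rw [hyp0F1, tsum_eq_single 0 fun n hn => by simp [hn]]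
  simp [rise]

theorem hasDerivAt_hyp0F1 {c : ℝ} (hc : 0 < c) (x : ℝ) :
    HasDerivAt (hyp0F1 c) (hyp0F1 (c + 1) x / c) x := by
  have hc1 : 0 < c + 1 := by linarith
  have hcoeff : ∀ n : ℕ, (n + 1) * hyp0F1Coeff c (n + 1) = hyp0F1Coeff (c + 1) n / c :=
    fun n => by rw [hyp0F1Coeff_add_one hc.ne', mul_div_cancel_left₀ _ hc.ne']
  have hderiv := hasDerivAt_tsum_mul_pow (u := hyp0F1Coeff c) (fun r =>
    ((summable_hyp0F1Coeff_mul_pow hc1 r).div_const c).congr fun n => by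
      rw [abs_of_pos (hyp0F1Coeff_pos hc _), hcoeff]; ring) x
  have hvalue : ∑' n : ℕ, (n + 1) * hyp0F1Coeff c (n + 1) * x ^ n = hyp0F1 (c + 1) x / c := by
    simp only [hcoeff, div_mul_eq_mul_div]
    exact ((hasSum_hyp0F1 hc1 x).div_const c).tsum_eq
  rwa [hvalue, funext fun y => (hasSum_hyp0F1 hc y).tsum_eq] at hderiv

theorem sum_antidiagonal_hyp0F1Coeff_mul_nonneg {d : ℝ} (hd : 0 < d) (n : ℕ) :
    0 ≤ ∑ p ∈ antidiagonal n, hyp0F1Coeff d p.1 * hyp0F1Coeff d p.2 *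
      ((p.1 + p.2 : ℝ) - ((p.1 : ℝ) - p.2) ^ 2) := by
  obtain _ | n := n
  · simp
  set b := hyp0F1Coeff d
  let H : ℕ → ℕ → ℝ := fun i j => i * (j + 1 - i) * b i * b j
  -- summation by parts against `H`; the boundary terms cancel since `H 0 _ = 0`
  have step : ∀ i m : ℕ, b i * b (m + 1) * ((i + (m + 1 : ℕ) : ℝ) - ((i : ℝ) - (m + 1 : ℕ)) ^ 2)
      = (H i (m + 1) - H (i + 1) m)
        + (i + 1) * (m + 1) * ((m : ℝ) - i) ^ 2 * b (i + 1) * b (m + 1) := by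
    intro i m
    have : d + i ≠ 0 := by positivity
    have : d + m ≠ 0 := by positivity
    simp only [H, b, hyp0F1Coeff_succ d i, hyp0F1Coeff_succ d m]
    push_cast
    field_simp
    ring
  have hboundary : b (n + 1) * b 0 * ((n + 1 : ℕ) + (0 : ℕ) - (((n + 1 : ℕ) : ℝ) - (0 : ℕ)) ^ 2)
      = H (n + 1) 0 - H 0 (n + 1) := by
    simp only [H]
    push_cast
    ring
  rw [Nat.sum_antidiagonal_succ']
  simp only [step, sum_add_distrib, Nat.sum_antidiagonal_sub_succ]
  have hb := hyp0F1Coeff_pos hd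
  have := sum_nonneg fun (p : ℕ × ℕ) (_ : p ∈ antidiagonal n) =>
    (by have := hb (p.1 + 1); have := hb (p.2 + 1); positivity :
      0 ≤ (p.1 + 1 : ℝ) * (p.2 + 1) * ((p.2 : ℝ) - p.1) ^ 2 * b (p.1 + 1) * b (p.2 + 1))
  linarith

theorem hyp0F1Coeff_antidiagonal_le {c : ℝ} (hc : 0 < c) (n : ℕ) :
    ∑ p ∈ antidiagonal n, c * p.1 * hyp0F1Coeff c p.1 * hyp0F1Coeff (c + 1) p.2
      + c * ∑ p ∈ antidiagonal n, hyp0F1Coeff (c + 1) p.1 * hyp0F1Coeff (c + 1) p.2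
      + c * (c - 1) * ∑ p ∈ antidiagonal n, hyp0F1Coeff c p.1 * hyp0F1Coeff (c + 1) p.2
      ≤ c ^ 2 * ∑ p ∈ antidiagonal n, hyp0F1Coeff c p.1 * hyp0F1Coeff c p.2 := by
  set A := hyp0F1Coeff c
  set B := hyp0F1Coeff (c + 1)
  let f : ℕ × ℕ → ℝ := fun p => c ^ 2 * (A p.1 * A p.2) - c * p.1 * A p.1 * B p.2
    - c * (B p.1 * B p.2) - c * (c - 1) * (A p.1 * B p.2)
  have hpair : ∀ p : ℕ × ℕ,
      f p + f p.swap = B p.1 * B p.2 * ((p.1 + p.2 : ℝ) - ((p.1 : ℝ) - p.2) ^ 2) := by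
    rintro ⟨i, j⟩
    have hi := mul_hyp0F1Coeff hc i
    have hj := mul_hyp0F1Coeff hc j
    simp only [f, Prod.swap]
    linear_combination (2 * c * A j - i * B j - (c - 1) * B j) * hi
      + (2 * (c + i) * B i - j * B i - (c - 1) * B i) * hj
  have hsym : 2 * ∑ p ∈ antidiagonal n, f p
      = ∑ p ∈ antidiagonal n, B p.1 * B p.2 * ((p.1 + p.2 : ℝ) - ((p.1 : ℝ) - p.2) ^ 2) := by
    rw [two_mul]
    nth_rw 2 [← Nat.sum_antidiagonal_swap]
    rw [← sum_add_distrib]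
    exact sum_congr rfl fun p _ => hpair p
  have hsum : ∑ p ∈ antidiagonal n, f p = c ^ 2 * ∑ p ∈ antidiagonal n, A p.1 * A p.2
      - ∑ p ∈ antidiagonal n, c * p.1 * A p.1 * B p.2
      - c * ∑ p ∈ antidiagonal n, B p.1 * B p.2
      - c * (c - 1) * ∑ p ∈ antidiagonal n, A p.1 * B p.2 := by
    simp only [f, sum_sub_distrib, mul_sum]
  have := sum_antidiagonal_hyp0F1Coeff_mul_nonneg (d := c + 1) (by linarith) n
  linarith

lemma hasSum_mul_hyp0F1_add_one {c : ℝ} (hc : 0 < c) (y : ℝ) :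
    HasSum (fun n => c * n * hyp0F1Coeff c n * y ^ n) (y * hyp0F1 (c + 1) y) := by
  rw [← hasSum_nat_add_iff' 1]
  simp only [range_one, sum_singleton, Nat.cast_zero, mul_zero, zero_mul, sub_zero]
  refine ((hasSum_hyp0F1 (by linarith) y).mul_left y).congr_fun fun n => ?_
  rw [hyp0F1Coeff_add_one hc.ne']
  push_cast
  ring

theorem hyp0F1_quadratic_le {c y : ℝ} (hc : 0 < c) (hy : 0 ≤ y) :
    (y + c) * hyp0F1 (c + 1) y ^ 2 + c * (c - 1) * hyp0F1 c y * hyp0F1 (c + 1) y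
      ≤ c ^ 2 * hyp0F1 c y ^ 2 := by
  have hc1 : 0 < c + 1 := by linarith
  have hA0 := fun n => (hyp0F1Coeff_pos hc n).le
  have hB0 := fun n => (hyp0F1Coeff_pos hc1 n).le
  have hA := summable_hyp0F1Coeff_mul_pow hc
  have hB := summable_hyp0F1Coeff_mul_pow hc1
  have hnA0 : ∀ n : ℕ, 0 ≤ c * n * hyp0F1Coeff c n := fun n => by have := hA0 n; positivity
  have hnA := fun r => (hasSum_mul_hyp0F1_add_one hc r).summable
  have hseries := (((hasSum_antidiagonal_mul_pow hA0 hA0 hA hA y).mul_left (c ^ 2)).sub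
    (hasSum_antidiagonal_mul_pow hnA0 hB0 hnA hB y)).sub
    ((hasSum_antidiagonal_mul_pow hB0 hB0 hB hB y).mul_left c) |>.sub
    ((hasSum_antidiagonal_mul_pow hA0 hB0 hA hB y).mul_left (c * (c - 1)))
  simp only [(hasSum_hyp0F1 hc y).tsum_eq, (hasSum_hyp0F1 hc1 y).tsum_eq,
    (hasSum_mul_hyp0F1_add_one hc y).tsum_eq] at hseries
  have := hseries.nonneg fun n => by
    linear_combination mul_le_mul_of_nonneg_right (hyp0F1Coeff_antidiagonal_le hc n)
      (pow_nonneg hy n)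
  linear_combination this

theorem hyp0F1_add_one_div_le {c x : ℝ} (hc : 0 < c) (hx : 0 ≤ x) :
    hyp0F1 (c + 1) x / c ≤ 2 / (√(4 * x + (c + 1) ^ 2) + c - 1) * hyp0F1 c x := by
  set F := hyp0F1 c x
  set E := hyp0F1 (c + 1) x
  set s := √(4 * x + (c + 1) ^ 2)
  have hs2 : s ^ 2 = 4 * x + (c + 1) ^ 2 := Real.sq_sqrt (by positivity)
  have hs : c + 1 ≤ s := Real.le_sqrt_of_sq_le (by nlinarith)
  have hF : 0 ≤ F := (hasSum_hyp0F1 hc x).nonneg fun n => by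
    have := hyp0F1Coeff_pos hc n; positivity
  have hsq : (2 * (x + c) * E + c * (c - 1) * F) ^ 2 ≤ (c * s * F) ^ 2 := by
    linear_combination 4 * (x + c) * hyp0F1_quadratic_le hc hx - (c * F) ^ 2 * hs2
  have hlin : 2 * (x + c) * E + c * (c - 1) * F ≤ c * s * F :=
    (abs_le_of_sq_le_sq' hsq (by positivity)).2
  have hmul : 2 * (x + c) * ((s + c - 1) * E) ≤ 2 * (x + c) * (2 * c * F) := by
    linear_combination mul_le_mul_of_nonneg_left hlin (by linarith : 0 ≤ s + c - 1) + c * F * hs2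
  rw [div_le_iff₀ hc, div_mul_eq_mul_div, div_mul_eq_mul_div, le_div_iff₀ (by linarith)]
  linarith [le_of_mul_le_mul_left hmul (by positivity)]

theorem hasDerivAt_sqrt_add_mul_log {c y : ℝ} (hc : 0 < c) (hy : 0 ≤ y) :
    HasDerivAt (fun y => √(4 * y + (c + 1) ^ 2)
        + (1 - c) * log ((c - 1) / (2 * c) + 1 / (2 * c) * √(4 * y + (c + 1) ^ 2)))
      (2 / (√(4 * y + (c + 1) ^ 2) + c - 1)) y := by
  set s := √(4 * y + (c + 1) ^ 2)
  have hs : c + 1 ≤ s := Real.le_sqrt_of_sq_le (by nlinarith)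
  have hsqrt : HasDerivAt (fun y => √(4 * y + (c + 1) ^ 2)) (4 / (2 * s)) y :=
    ((hasDerivAt_id' y).const_mul 4).add_const ((c + 1) ^ 2) |>.sqrt (by nlinarith)
      |>.congr_deriv (by simp [s])
  have hs0 : s ≠ 0 := by linarith
  have hsc : 0 < s + c - 1 := by linarith
  have hu : (c - 1) / (2 * c) + 1 / (2 * c) * s = (s + c - 1) / (2 * c) := by
    field_simp
    ring
  refine (hsqrt.add ((((hsqrt.const_mul (1 / (2 * c))).const_add ((c - 1) / (2 * c))).log
    (by rw [hu]; exact (div_pos hsc (by positivity)).ne')).const_mul (1 - c))).congr_deriv ?_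
  rw [hu]
  field_simp
  ring

theorem stmt10 (c x : ℝ) (hc : 1 < c) (hx : 0 ≤ x) :
    (∑' n : ℕ, x ^ n / (rise c n * (Nat.factorial n)))
      ≤ Real.exp (Real.sqrt (4 * x + (c + 1) ^ 2) - c - 1) *
          ((c - 1) / (2 * c) + (1 / (2 * c)) * Real.sqrt (4 * x + (c + 1) ^ 2)) ^ (1 - c) := by
  have hc0 : 0 < c := zero_lt_one.trans hc
  have hbound := le_mul_exp_sub_of_hasDerivAt hx (fun y _ => hasDerivAt_hyp0F1 hc0 y)
    (fun y hy => hasDerivAt_sqrt_add_mul_log hc0 hy.1)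
    (fun y hy => hyp0F1_add_one_div_le hc0 hy.1)
  have hsqrt0 : √(4 * 0 + (c + 1) ^ 2) = c + 1 := by
    rw [mul_zero, zero_add, sqrt_sq (by linarith)]
  have hu0 : (c - 1) / (2 * c) + 1 / (2 * c) * (c + 1) = 1 := by
    field_simp
    ring
  rw [hsqrt0, hu0, log_one, mul_zero, add_zero, hyp0F1_zero, one_mul] at hbound
  have hu : 0 < (c - 1) / (2 * c) + 1 / (2 * c) * √(4 * x + (c + 1) ^ 2) :=
    add_pos_of_nonneg_of_pos (div_nonneg (by linarith) (by positivity))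
      (mul_pos (by positivity) (sqrt_pos.2 (by nlinarith)))
  rw [rpow_def_of_pos hu, ← exp_add]
  exact hbound.trans_eq (congrArg exp (by ring))
end
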